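/- For every integer k ≥ 0 and z > 0, the truncated-Poisson mean ψ_k(z) = z·f_{k−1}(z)/f_k(z) satisfies lim_{z→0+} ψ_k(z) = k and lim_{z→∞} ψ_k(z) = ∞; consequently, for any m > k the equation ψ_k(z) = m has a unique positive root z. -/

import Mathlib

/-! With `a_j(z) = z^j / j!` for `j ≥ k`, `ψ_k(z) = Σ j a_j(z) / Σ a_j(z)` is the mean of the Poisson
law conditioned on `[k, ∞)`, so `k ≤ ψ_k(z)`; the identity `z f_{k-1} = z f_k + k z^k / k!` together
with `z^k / k! ≤ f_k` gives `z ≤ ψ_k(z) ≤ k + z`, hence both limits. For `x < y` the ratio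
`a_j(y) / a_j(x) = (y / x)^j` increases with `j`, and symmetrizing the Cauchy product of numerator and
denominator shows `ψ_k(x) < ψ_k(y)`. The root then exists by the intermediate value theorem and is
unique by strict monotonicity. -/

open Real Filter Set

/-- `truncExpSum k z = Σ_{j≥k} z^j/j!`. -/
noncomputable def truncExpSum (k : ℕ) (z : ℝ) : ℝ :=
  ∑' j : ℕ, if k ≤ j then z ^ j / (Nat.factorial j : ℝ) else 0

/-- `poisTail k z = P(Poi(z) ≥ k) = e^{-z} Σ_{j≥k} z^j/j!`. -/
noncomputable def poisTail (k : ℕ) (z : ℝ) : ℝ := Real.exp (-z) * truncExpSum k z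

/-- Mean of Poisson(z) conditioned on being ≥ k: `ψ_k(z) = z f_{k-1}(z)/f_k(z)`. -/
noncomputable def truncMean (k : ℕ) (z : ℝ) : ℝ :=
  z * truncExpSum (k - 1) z / truncExpSum k z

/-- Second moment of the truncated Poisson. -/
noncomputable def truncSecondMoment (k : ℕ) (z : ℝ) : ℝ :=
  (∑' j : ℕ, if k ≤ j then (j : ℝ) ^ 2 * z ^ j / (Nat.factorial j : ℝ) else 0)
    / truncExpSum k z

/-- Variance of the truncated Poisson. -/
noncomputable def truncVar (k : ℕ) (z : ℝ) : ℝ :=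
  truncSecondMoment k z - (truncMean k z) ^ 2

/-- `φ_r(z) = z·P(Poi(z)=r−1)/P(Poi(z)≥r)` for `r ≥ 1`, with `φ_0 := 0`. -/
noncomputable def phiP (r : ℕ) (z : ℝ) : ℝ :=
  if r = 0 then 0
  else z * (Real.exp (-z) * z ^ (r - 1) / (Nat.factorial (r - 1) : ℝ)) / poisTail r z

/-- `H(z_i,z_o) = (1 − φ_{k_1}(z_i))(1 − φ_{k_2}(z_o)) − φ_{k_1−1}(z_i)φ_{k_2−1}(z_o)`. -/
noncomputable def Hfun (k1 k2 : ℕ) (zi zo : ℝ) : ℝ :=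
  (1 - phiP k1 zi) * (1 - phiP k2 zo) - phiP (k1 - 1) zi * phiP (k2 - 1) zo

/-- `Ψ(z_i,z_o) = max{ z_i/(p_{k_1}(z_i)p_{k_2−1}(z_o)), z_o/(p_{k_2}(z_o)p_{k_1−1}(z_i)) }`. -/
noncomputable def Psi (k1 k2 : ℕ) (zi zo : ℝ) : ℝ :=
  max (zi / (poisTail k1 zi * poisTail (k2 - 1) zo))
      (zo / (poisTail k2 zo * poisTail (k1 - 1) zi))

open scoped Nat Topology

noncomputable def truncExpTerm (k : ℕ) (z : ℝ) (j : ℕ) : ℝ :=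
  if k ≤ j then z ^ j / j ! else 0

lemma truncExpTerm_nonneg {z : ℝ} (hz : 0 ≤ z) (k : ℕ) : 0 ≤ truncExpTerm k z := fun j => by
  unfold truncExpTerm; split_ifs <;> positivity

lemma hasSum_truncExpTerm (k : ℕ) (z : ℝ) : HasSum (truncExpTerm k z) (truncExpSum k z) := by
  refine Summable.hasSum (((NormedSpace.expSeries_div_hasSum_exp z).summable.indicator
    {j | k ≤ j}).congr fun j => ?_)
  simp [Set.indicator_apply, truncExpTerm]

lemma truncExpSum_zero (z : ℝ) : truncExpSum 0 z = exp z := by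
  rw [exp_eq_exp_ℝ, ← (NormedSpace.expSeries_div_hasSum_exp z).tsum_eq]
  simp [truncExpSum]

lemma truncExpSum_eq_add_succ (k : ℕ) (z : ℝ) :
    truncExpSum k z = z ^ k / k ! + truncExpSum (k + 1) z := by
  refine (hasSum_truncExpTerm k z).unique ?_
  convert (hasSum_ite_eq k (z ^ k / k !)).add (hasSum_truncExpTerm (k + 1) z) using 1
  funext j
  rcases lt_trichotomy j k with h | rfl | h
  · simp [truncExpTerm, h.ne, not_le.2 h, not_le.2 (h.trans (Nat.lt_succ_self k))]
  · simp [truncExpTerm]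
  · simp [truncExpTerm, h.ne', h.le, Nat.succ_le_of_lt h]

lemma continuous_truncExpSum (k : ℕ) : Continuous (truncExpSum k) := by
  induction k with
  | zero => simpa [funext truncExpSum_zero] using continuous_exp
  | succ k ih =>
    have h : truncExpSum (k + 1) = fun z => truncExpSum k z - z ^ k / k ! := by
      funext z; rw [truncExpSum_eq_add_succ k z]; ring
    rw [h]
    fun_prop

lemma pow_div_factorial_le_truncExpSum (k : ℕ) {z : ℝ} (hz : 0 ≤ z) :
    z ^ k / k ! ≤ truncExpSum k z := by
  rw [truncExpSum_eq_add_succ k z, le_add_iff_nonneg_right]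
  exact tsum_nonneg (truncExpTerm_nonneg hz (k + 1))

lemma truncExpSum_pos (k : ℕ) {z : ℝ} (hz : 0 < z) : 0 < truncExpSum k z :=
  (by positivity : 0 < z ^ k / k !).trans_le (pow_div_factorial_le_truncExpSum k hz.le)

lemma mul_truncExpSum_pred (k : ℕ) (z : ℝ) :
    z * truncExpSum (k - 1) z = z * truncExpSum k z + k * (z ^ k / k !) := by
  cases k with
  | zero => simp
  | succ n =>
    rw [Nat.add_sub_cancel, truncExpSum_eq_add_succ n z, Nat.factorial_succ, pow_succ]
    push_cast
    field_simp
    ring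

lemma hasSum_natCast_mul_truncExpTerm (k : ℕ) (z : ℝ) :
    HasSum (fun j : ℕ => (j : ℝ) * truncExpTerm k z j) (z * truncExpSum (k - 1) z) := by
  rw [← hasSum_nat_add_iff' 1]
  simp only [Finset.sum_range_one, Nat.cast_zero, zero_mul, sub_zero]
  refine ((hasSum_truncExpTerm (k - 1) z).mul_left z).congr_fun fun j => ?_
  have hk : k ≤ j + 1 ↔ k - 1 ≤ j := by omega
  simp only [truncExpTerm, hk]
  split_ifs
  · rw [Nat.factorial_succ, pow_succ]
    push_cast
    field_simp
  · simp

lemma pow_mul_pow_le_pow_mul_pow {x y : ℝ} (hx : 0 ≤ x) (hxy : x ≤ y) {i j : ℕ} (hji : j ≤ i) :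
    x ^ i * y ^ j ≤ y ^ i * x ^ j := by
  obtain ⟨d, rfl⟩ := Nat.exists_eq_add_of_le hji
  have hy : 0 ≤ y := hx.trans hxy
  calc x ^ (j + d) * y ^ j = x ^ j * y ^ j * x ^ d := by ring
    _ ≤ x ^ j * y ^ j * y ^ d := by gcongr
    _ = y ^ (j + d) * x ^ j := by ring

lemma pow_mul_pow_lt_pow_mul_pow {x y : ℝ} (hx : 0 < x) (hxy : x < y) {i j : ℕ} (hji : j < i) :
    x ^ i * y ^ j < y ^ i * x ^ j := by
  obtain ⟨d, rfl⟩ := Nat.exists_eq_add_of_lt hji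
  have hy : 0 < y := hx.trans hxy
  calc x ^ (j + d + 1) * y ^ j = x ^ j * y ^ j * x ^ (d + 1) := by ring
    _ < x ^ j * y ^ j * y ^ (d + 1) := by gcongr
    _ = y ^ (j + d + 1) * x ^ j := by ring

lemma tsum_natCast_mul_mul_tsum_lt {u v : ℕ → ℝ} (hu : 0 ≤ u) (hv : 0 ≤ v)
    (hsu : Summable u) (hsv : Summable v)
    (hsu' : Summable fun i : ℕ => (i : ℝ) * u i) (hsv' : Summable fun i : ℕ => (i : ℝ) * v i)
    (hratio : ∀ i j, j ≤ i → u i * v j ≤ v i * u j)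
    (hstrict : ∃ i j, j < i ∧ u i * v j < v i * u j) :
    (∑' i : ℕ, (i : ℝ) * u i) * ∑' j, v j < (∑' i : ℕ, (i : ℝ) * v i) * ∑' j, u j := by
  have hmean_nonneg : ∀ w : ℕ → ℝ, 0 ≤ w → 0 ≤ fun i : ℕ => (i : ℝ) * w i :=
    fun w hw i => mul_nonneg i.cast_nonneg (hw i)
  set F : ℕ × ℕ → ℝ := fun p => p.1 * u p.1 * v p.2
  set G : ℕ × ℕ → ℝ := fun p => p.1 * v p.1 * u p.2
  have hF : Summable F := hsu'.mul_of_nonneg hsv (hmean_nonneg u hu) hv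
  have hG : Summable G := hsv'.mul_of_nonneg hsu (hmean_nonneg v hv) hu
  rw [hsu'.tsum_mul_tsum hsv hF, hsv'.tsum_mul_tsum hsu hG, ← sub_pos, ← hG.tsum_sub hF]
  set D : ℕ × ℕ → ℝ := fun p => G p - F p
  have hD : Summable D := hG.sub hF
  have hDswap : Summable fun p : ℕ × ℕ => D p.swap := (Equiv.prodComm ℕ ℕ).summable_iff.2 hD
  -- `∑ D = ∑ D ∘ swap`, so it suffices that `D + D ∘ swap ≥ 0`, with one strict term
  have hsym : ∀ i j : ℕ, D (i, j) + D (i, j).swap = (i - j : ℝ) * (v i * u j - u i * v j) := by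
    intro i j
    simp only [D, F, G, Prod.swap_prod_mk]
    ring
  have hsym_nonneg : ∀ p : ℕ × ℕ, 0 ≤ D p + D p.swap := by
    rintro ⟨i, j⟩
    rw [hsym]
    rcases le_total j i with h | h
    · exact mul_nonneg (sub_nonneg.2 (by exact_mod_cast h)) (sub_nonneg.2 (hratio i j h))
    · refine mul_nonneg_of_nonpos_of_nonpos (sub_nonpos.2 (by exact_mod_cast h)) ?_
      linarith [hratio j i h, mul_comm (u j) (v i), mul_comm (v j) (u i)]
  obtain ⟨i, j, hji, hlt⟩ := hstrict
  have hsym_pos : 0 < D (i, j) + D (i, j).swap := by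
    rw [hsym]
    exact mul_pos (sub_pos.2 (by exact_mod_cast hji)) (sub_pos.2 hlt)
  have hswap_eq : ∑' p : ℕ × ℕ, D p.swap = ∑' p, D p := (Equiv.prodComm ℕ ℕ).tsum_eq D
  have := (hD.add hDswap).tsum_pos hsym_nonneg (i, j) hsym_pos
  rw [hD.tsum_add hDswap, hswap_eq] at this
  linarith

lemma truncExpTerm_mul_le {x y : ℝ} (hx : 0 ≤ x) (hxy : x ≤ y) (k : ℕ) {i j : ℕ} (hji : j ≤ i) :
    truncExpTerm k x i * truncExpTerm k y j ≤ truncExpTerm k y i * truncExpTerm k x j := by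
  unfold truncExpTerm
  split_ifs with hi hj
  · rw [div_mul_div_comm, div_mul_div_comm]
    exact div_le_div_of_nonneg_right (pow_mul_pow_le_pow_mul_pow hx hxy hji) (by positivity)
  all_goals simp

lemma truncExpTerm_mul_lt {x y : ℝ} (hx : 0 < x) (hxy : x < y) (k : ℕ) :
    truncExpTerm k x (k + 1) * truncExpTerm k y k < truncExpTerm k y (k + 1) * truncExpTerm k x k := by
  simp only [truncExpTerm, le_refl, Nat.le_succ, if_true]
  rw [div_mul_div_comm, div_mul_div_comm]
  exact div_lt_div_of_pos_right (pow_mul_pow_lt_pow_mul_pow hx hxy (Nat.lt_succ_self k))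
    (by positivity)

section TruncMean

variable (k : ℕ) {z : ℝ}

lemma truncMean_eq_tsum_div :
    truncMean k z = (∑' j : ℕ, (j : ℝ) * truncExpTerm k z j) / truncExpSum k z := by
  rw [truncMean, (hasSum_natCast_mul_truncExpTerm k z).tsum_eq]

lemma natCast_le_truncMean (hz : 0 < z) : (k : ℝ) ≤ truncMean k z := by
  rw [truncMean, le_div_iff₀ (truncExpSum_pos k hz)]
  refine hasSum_le (fun j => ?_) ((hasSum_truncExpTerm k z).mul_left (k : ℝ))
    (hasSum_natCast_mul_truncExpTerm k z)
  unfold truncExpTerm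
  split_ifs with h
  · exact mul_le_mul_of_nonneg_right (by exact_mod_cast h) (by positivity)
  · simp

lemma le_truncMean (hz : 0 < z) : z ≤ truncMean k z := by
  rw [truncMean, le_div_iff₀ (truncExpSum_pos k hz), mul_truncExpSum_pred]
  have : 0 ≤ (k : ℝ) * (z ^ k / k !) := by positivity
  linarith

lemma truncMean_le_add (hz : 0 < z) : truncMean k z ≤ k + z := by
  rw [truncMean, div_le_iff₀ (truncExpSum_pos k hz), mul_truncExpSum_pred]
  have := mul_le_mul_of_nonneg_left (pow_div_factorial_le_truncExpSum k hz.le) k.cast_nonneg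
  linarith

lemma continuousOn_truncMean : ContinuousOn (truncMean k) (Ioi 0) :=
  ((continuous_id.mul (continuous_truncExpSum (k - 1))).continuousOn.div
    (continuous_truncExpSum k).continuousOn) fun _ hz => (truncExpSum_pos k hz).ne'

lemma tendsto_truncMean_nhdsGT_zero : Tendsto (truncMean k) (𝓝[>] 0) (𝓝 k) := by
  have hlim : Tendsto (fun z : ℝ => (k : ℝ) + z) (𝓝[>] 0) (𝓝 k) := by
    simpa using ((continuous_const_add (k : ℝ)).tendsto 0).mono_left nhdsWithin_le_nhds
  refine tendsto_of_tendsto_of_tendsto_of_le_of_le' tendsto_const_nhds hlim ?_ ?_ <;>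
    filter_upwards [self_mem_nhdsWithin] with z hz
  exacts [natCast_le_truncMean k hz, truncMean_le_add k hz]

lemma tendsto_truncMean_atTop : Tendsto (truncMean k) atTop atTop :=
  tendsto_atTop_mono' atTop ((eventually_gt_atTop 0).mono fun _ hz => le_truncMean k hz) tendsto_id

lemma strictMonoOn_truncMean : StrictMonoOn (truncMean k) (Ioi 0) := by
  intro x (hx : 0 < x) y (hy : 0 < y) hxy
  rw [truncMean_eq_tsum_div, truncMean_eq_tsum_div,
    div_lt_div_iff₀ (truncExpSum_pos k hx) (truncExpSum_pos k hy)]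
  exact tsum_natCast_mul_mul_tsum_lt (truncExpTerm_nonneg hx.le k) (truncExpTerm_nonneg hy.le k)
    (hasSum_truncExpTerm k x).summable (hasSum_truncExpTerm k y).summable
    (hasSum_natCast_mul_truncExpTerm k x).summable (hasSum_natCast_mul_truncExpTerm k y).summable
    (fun _ _ => truncExpTerm_mul_le hx.le hxy.le k)
    ⟨k + 1, k, Nat.lt_succ_self k, truncExpTerm_mul_lt hx hxy k⟩

end TruncMean

/-- `ψ_k(0+) = k`, `ψ_k(∞) = ∞`, and for `m > k` the equation `ψ_k(z) = m`
has a unique positive root. -/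
theorem stmt2 (k : ℕ) :
    Tendsto (truncMean k) (nhdsWithin 0 (Set.Ioi 0)) (nhds (k : ℝ)) ∧
    Tendsto (truncMean k) atTop atTop ∧
    (∀ m : ℝ, (k : ℝ) < m → ∃! z : ℝ, 0 < z ∧ truncMean k z = m) := by
  refine ⟨tendsto_truncMean_nhdsGT_zero k, tendsto_truncMean_atTop k, fun m hm => ?_⟩
  set a := (m - k) / 2 with ha_def
  have ha : 0 < a := by linarith
  have ham : a ≤ m := by linarith [k.cast_nonneg (α := ℝ)]
  have hbelow : truncMean k a ≤ m := by linarith [truncMean_le_add k ha]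
  have habove : m ≤ truncMean k m := le_truncMean k (ha.trans_le ham)
  obtain ⟨z, hz, hzm⟩ := intermediate_value_Icc ham
    ((continuousOn_truncMean k).mono fun _ hw => ha.trans_le hw.1) ⟨hbelow, habove⟩
  refine ⟨z, ⟨ha.trans_le hz.1, hzm⟩, fun w ⟨hw, hwm⟩ => ?_⟩
  exact (strictMonoOn_truncMean k).injOn hw (ha.trans_le hz.1) (hwm.trans hzm.symm)
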